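/- arXiv:1109.2328 — 3 statements merged into one kernel-verified Lean document; each statement's English description precedes it below -/
import Mathlib

section
/- For every t > 0 and every real x with 0 ≤ x ≤ 3t, the series ∑_{m ∈ ℤ, m ≠ 0} 2/(e^{(x−2mt)/2} + e^{−(x−2mt)/2})² converges, and its sum is strictly less than min{1/2, 2e^{x−2t}} + 4e^{−t}/(1 − e^{−2t}). -/
/-!
With `f = derivTanhHalf`, the series is `∑_{m ≠ 0} f (x - 2mt)`. Since
`(e^{u/2} + e^{-u/2})² ≥ max 4 e^{|u|}`, we have `f ≤ 1/2` and `f u ≤ 2 e^{-|u|}`.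
The term `m = 1` gives the `min`; for `m ≥ 2` the bound `x ≤ 3t` makes the terms at most
`2 e^{-t} r^{m-2}`, and for `m ≤ -1` the bound `x ≥ 0` makes them at most `2 r · r^{-m-1}`,
where `r = e^{-2t}`. Summing the two geometric series, `r < e^{-t}` gives the strict bound.
-/

open Real

/-- The derivative of `u ↦ tanh (u / 2)`. -/
noncomputable def derivTanhHalf (u : ℝ) : ℝ :=
  2 / (exp (u / 2) + exp (-u / 2)) ^ 2

lemma derivTanhHalf_nonneg (u : ℝ) : 0 ≤ derivTanhHalf u := by
  unfold derivTanhHalf; positivity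

lemma derivTanhHalf_neg (u : ℝ) : derivTanhHalf (-u) = derivTanhHalf u := by
  simp only [derivTanhHalf, neg_neg, add_comm]

lemma derivTanhHalf_le_half (u : ℝ) : derivTanhHalf u ≤ 1 / 2 := by
  have hprod : exp (u / 2) * exp (-u / 2) = 1 := by rw [← exp_add]; simp [neg_div]
  unfold derivTanhHalf
  rw [div_le_div_iff₀ (by positivity) two_pos]
  nlinarith [sq_nonneg (exp (u / 2) - exp (-u / 2))]

lemma derivTanhHalf_le_two_mul_exp (u : ℝ) : derivTanhHalf u ≤ 2 * exp u := by
  have hsq : exp (-u / 2) ^ 2 * exp u = 1 := by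
    rw [← exp_nat_mul, ← exp_add]; simp [neg_div]; ring_nf
  unfold derivTanhHalf
  rw [div_le_iff₀ (by positivity)]
  nlinarith [exp_pos (u / 2), exp_pos (-u / 2), exp_pos u]

lemma derivTanhHalf_le_two_mul_exp_neg (u : ℝ) : derivTanhHalf u ≤ 2 * exp (-u) := by
  simpa only [derivTanhHalf_neg] using derivTanhHalf_le_two_mul_exp (-u)

lemma exists_hasSum_le_of_le_geometric {g : ℕ → ℝ} {c r : ℝ} (hg : ∀ n, 0 ≤ g n)
    (hr0 : 0 ≤ r) (hr1 : r < 1) (hle : ∀ n, g n ≤ c * r ^ n) :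
    ∃ a, HasSum g a ∧ a ≤ c / (1 - r) := by
  have hgeom := (hasSum_geometric_of_lt_one hr0 hr1).mul_left c
  have hsum : Summable g := .of_nonneg_of_le hg hle hgeom.summable
  exact ⟨_, hsum.hasSum, hasSum_le hle hsum.hasSum hgeom⟩

lemma HasSum.int_ne_zero {M : Type*} [AddCommMonoid M] [TopologicalSpace M] [ContinuousAdd M]
    {f : ℤ → M} {a b : M} (hpos : HasSum (fun n : ℕ ↦ f (n + 1)) a)
    (hneg : HasSum (fun n : ℕ ↦ f (-(n + 1))) b) :
    HasSum (fun m : {m : ℤ // m ≠ 0} ↦ f m) (a + b) := by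
  change HasSum (f ∘ Subtype.val : ({0}ᶜ : Set ℤ) → M) (a + b)
  rw [hasSum_subtype_iff_indicator]
  have h := HasSum.of_add_one_of_neg_add_one (f := Set.indicator {0}ᶜ f)
    (by convert hpos using 2 with n; exact Set.indicator_of_mem (by simp; omega) f)
    (by convert hneg using 2 with n; exact Set.indicator_of_mem (by simp; omega) f)
  simpa using h

section

variable {t x : ℝ}

lemma derivTanhHalf_sub_le (hx3 : x ≤ 3 * t) (n : ℕ) :
    derivTanhHalf (x - 2 * (n + 2) * t) ≤ 2 * exp (-t) * exp (-2 * t) ^ n := by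
  calc derivTanhHalf (x - 2 * (n + 2) * t) ≤ 2 * exp (x - 2 * (n + 2) * t) :=
        derivTanhHalf_le_two_mul_exp _
    _ ≤ 2 * exp (-t + n * (-2 * t)) := by gcongr; linarith
    _ = 2 * exp (-t) * exp (-2 * t) ^ n := by rw [exp_add, exp_nat_mul, mul_assoc]

lemma derivTanhHalf_add_le (hx0 : 0 ≤ x) (n : ℕ) :
    derivTanhHalf (x + 2 * (n + 1) * t) ≤ 2 * exp (-2 * t) * exp (-2 * t) ^ n := by
  calc derivTanhHalf (x + 2 * (n + 1) * t) ≤ 2 * exp (-(x + 2 * (n + 1) * t)) :=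
        derivTanhHalf_le_two_mul_exp_neg _
    _ ≤ 2 * exp (-2 * t + n * (-2 * t)) := by gcongr; linarith
    _ = 2 * exp (-2 * t) * exp (-2 * t) ^ n := by rw [exp_add, exp_nat_mul, mul_assoc]

end

/-- For every `t > 0` and every real `x` with `0 ≤ x ≤ 3t`, the series
`∑_{m ∈ ℤ, m ≠ 0} 2/(e^{(x−2mt)/2} + e^{−(x−2mt)/2})²` converges, and its sum is strictly
less than `min{1/2, 2e^{x−2t}} + 4e^{−t}/(1 − e^{−2t})`. -/
theorem statement0 (t x : ℝ) (ht : 0 < t) (hx0 : 0 ≤ x) (hx3 : x ≤ 3 * t) :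
    Summable (fun m : {m : ℤ // m ≠ 0} =>
      2 / (Real.exp ((x - 2 * ((m : ℤ) : ℝ) * t) / 2)
          + Real.exp (-(x - 2 * ((m : ℤ) : ℝ) * t) / 2)) ^ 2) ∧
    (∑' m : {m : ℤ // m ≠ 0},
      2 / (Real.exp ((x - 2 * ((m : ℤ) : ℝ) * t) / 2)
          + Real.exp (-(x - 2 * ((m : ℤ) : ℝ) * t) / 2)) ^ 2)
      < min (1 / 2) (2 * Real.exp (x - 2 * t))
          + 4 * Real.exp (-t) / (1 - Real.exp (-2 * t)) := by
  set r := exp (-2 * t)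
  have hr0 : 0 ≤ r := (exp_pos _).le
  have hr1 : r < 1 := exp_lt_one_iff.2 (by linarith)
  obtain ⟨a, ha, ha_le⟩ := exists_hasSum_le_of_le_geometric
    (fun n ↦ derivTanhHalf_nonneg _) hr0 hr1 (derivTanhHalf_sub_le hx3)
  obtain ⟨b, hb, hb_le⟩ := exists_hasSum_le_of_le_geometric
    (fun n ↦ derivTanhHalf_nonneg _) hr0 hr1 (derivTanhHalf_add_le hx0)
  have hpos : HasSum (fun n : ℕ ↦ derivTanhHalf (x - 2 * (n + 1) * t))
      (derivTanhHalf (x - 2 * t) + a) := by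
    convert HasSum.zero_add (f := fun n : ℕ ↦ derivTanhHalf (x - 2 * (n + 1) * t)) ?_ using 2
    · simp
    · convert ha using 3; push_cast; ring
  have hsum : HasSum (fun m : {m : ℤ // m ≠ 0} ↦ derivTanhHalf (x - 2 * (m : ℤ) * t))
      (derivTanhHalf (x - 2 * t) + a + b) := by
    refine HasSum.int_ne_zero (f := fun m : ℤ ↦ derivTanhHalf (x - 2 * m * t)) ?_ ?_
    · exact_mod_cast hpos
    · convert hb using 3; push_cast; ring
  have hfirst : derivTanhHalf (x - 2 * t) ≤ min (1 / 2) (2 * exp (x - 2 * t)) :=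
    le_min (derivTanhHalf_le_half _) (derivTanhHalf_le_two_mul_exp _)
  have hb_lt : b < 2 * exp (-t) / (1 - r) :=
    hb_le.trans_lt (div_lt_div_of_pos_right (by gcongr; linarith) (by linarith))
  refine ⟨hsum.summable, hsum.tsum_eq ▸ ?_⟩
  calc derivTanhHalf (x - 2 * t) + a + b
      < min (1 / 2) (2 * exp (x - 2 * t)) + 2 * exp (-t) / (1 - r) + 2 * exp (-t) / (1 - r) :=
        add_lt_add_of_le_of_lt (add_le_add hfirst ha_le) hb_lt
    _ = _ := by ring
end

section
/- Let S_π = {z ∈ ℂ : 0 < Im z < π} and ℝ_π = {z ∈ ℂ : Im z = π}. Let c ∈ ℝ and let K ⊆ S_π be relatively closed in S_π with Re z ≤ c for all z ∈ K and with S_π∖K simply connected. Let V be a continuous complex-valued function on (S_π∖K) ∪ (c,∞) ∪ ((c,∞)+πi) that is holomorphic and injective on S_π∖K with V(S_π∖K) = S_π, satisfies Re V(z) → +∞ as Re z → +∞ with z ∈ S_π∖K, and satisfies V((c,∞)) ⊆ ℝ and V((c,∞)+πi) ⊆ ℝ_π. Then there exists h ∈ ℝ such that for every z in the domain of V with Re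 z ≥ c + ln 4, one has |V(z) − z − h| ≤ 12 e^{c − Re z}. -/
/-!
Under `w = e^z` the half-strip `{Re z > c, 0 ≤ Im z ≤ π}` becomes the closed upper half of
`{|w| > e^c}`, and `u(w) = V(log w) - log w` takes values in `|Im| < π` and is real on the real
axis, since `V` maps the two edges into `ℝ` and `ℝ_π`. Schwarz reflection extends `u` to all of
`{|w| > e^c}`. In the coordinate `1/w` this is a holomorphic function on the punctured disc of
radius `R = e^{-c}` with values in the strip `|Im| < π`. Conjugating by `tanh (ζ / 2)` shows that
it extends across `0`, with a real value `h` there. The Borel–Carathéodory inequality then gives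
`|V z - z - h| ≤ 2π|w| / (R - |w|)` at `w = e^{-z}`.
-/

open Complex Filter Metric Set Topology
open scoped Interval ComplexConjugate Real

section Morera

variable {E : Type*} [NormedAddCommGroup E] [NormedSpace ℂ E]

lemma integral_boundary_rect_eq_zero_of_notMem_Ioo_im {f : ℂ → E} {z w : ℂ}
    (hc : ContinuousOn f (Rectangle z w))
    (hd : ∀ x ∈ Rectangle z w, x.im ≠ 0 → DifferentiableAt ℂ f x)
    (h0 : (0 : ℝ) ∉ Ioo (min z.im w.im) (max z.im w.im)) :
    (∫ x : ℝ in z.re..w.re, f (x + z.im * I)) - (∫ x : ℝ in z.re..w.re, f (x + w.im * I)) +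
      I • (∫ y : ℝ in z.im..w.im, f (w.re + y * I)) -
      I • (∫ y : ℝ in z.im..w.im, f (z.re + y * I)) = 0 :=
  integral_boundary_rect_eq_zero_of_differentiable_on_off_countable f z w ∅ countable_empty hc
    fun x hx => hd x ⟨Ioo_subset_Icc_self hx.1.1, Ioo_subset_Icc_self hx.1.2⟩
      fun hx0 => h0 (hx0 ▸ hx.1.2)

lemma zero_notMem_Ioo_min_max_zero (a : ℝ) : (0 : ℝ) ∉ Ioo (min a 0) (max a 0) := by
  rcases le_total a 0 with h | h <;> simp [h]

lemma integral_boundary_rect_eq_zero_of_differentiableAt_im_ne_zero [CompleteSpace E]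
    {f : ℂ → E} {z w : ℂ} (hc : ContinuousOn f (Rectangle z w))
    (hd : ∀ x ∈ Rectangle z w, x.im ≠ 0 → DifferentiableAt ℂ f x) :
    (∫ x : ℝ in z.re..w.re, f (x + z.im * I)) - (∫ x : ℝ in z.re..w.re, f (x + w.im * I)) +
      I • (∫ y : ℝ in z.im..w.im, f (w.re + y * I)) -
      I • (∫ y : ℝ in z.im..w.im, f (z.re + y * I)) = 0 := by
  by_cases h0 : (0 : ℝ) ∈ Ioo (min z.im w.im) (max z.im w.im)
  swap
  · exact integral_boundary_rect_eq_zero_of_notMem_Ioo_im hc hd h0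
  have h0' : (0 : ℝ) ∈ [[z.im, w.im]] := Ioo_subset_Icc_self h0
  have hlow : Rectangle z w.re ⊆ Rectangle z w := fun x hx =>
    ⟨by simpa using hx.1, uIcc_subset_uIcc left_mem_uIcc h0' (by simpa using hx.2)⟩
  have hupp : Rectangle z.re w ⊆ Rectangle z w := fun x hx =>
    ⟨by simpa using hx.1, uIcc_subset_uIcc h0' right_mem_uIcc (by simpa using hx.2)⟩
  have hlow0 := integral_boundary_rect_eq_zero_of_notMem_Ioo_im (hc.mono hlow)
    (fun x hx => hd x (hlow hx)) (by simpa using zero_notMem_Ioo_min_max_zero z.im)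
  have hupp0 := integral_boundary_rect_eq_zero_of_notMem_Ioo_im (hc.mono hupp)
    (fun x hx => hd x (hupp hx))
    (by simpa [min_comm, max_comm] using zero_notMem_Ioo_min_max_zero w.im)
  simp only [ofReal_re, ofReal_im] at hlow0 hupp0
  have hside : ∀ x ∈ [[z.re, w.re]], ∀ a b : ℝ, [[a, b]] ⊆ [[z.im, w.im]] →
      IntervalIntegrable (fun y : ℝ => f (x + y * I)) MeasureTheory.volume a b :=
    fun x hx a b hab => ContinuousOn.intervalIntegrable <| hc.comp (by fun_prop)
      fun y hy => ⟨by simpa using hx, by simpa using hab hy⟩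
  have hsplit : ∀ x ∈ [[z.re, w.re]], (∫ y : ℝ in z.im..w.im, f (x + y * I)) =
      (∫ y : ℝ in z.im..0, f (x + y * I)) + ∫ y : ℝ in 0..w.im, f (x + y * I) := fun x hx =>
    (intervalIntegral.integral_add_adjacent_intervals
      (hside x hx _ _ (uIcc_subset_uIcc left_mem_uIcc h0'))
      (hside x hx _ _ (uIcc_subset_uIcc h0' right_mem_uIcc))).symm
  rw [hsplit _ left_mem_uIcc, hsplit _ right_mem_uIcc]
  linear_combination (norm := module) hlow0 + hupp0

theorem differentiableOn_of_continuousOn_of_differentiableAt_im_ne_zero [CompleteSpace E]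
    {f : ℂ → E} {U : Set ℂ} (hU : IsOpen U) (hc : ContinuousOn f U)
    (hd : ∀ z ∈ U, z.im ≠ 0 → DifferentiableAt ℂ f z) : DifferentiableOn ℂ f U := by
  refine (isConservativeOn_and_continuousOn_iff_isDifferentiableOn hU).1 ⟨fun z w hzw => ?_, hc⟩
  rw [← add_eq_zero_iff_eq_neg, wedgeIntegral_add_wedgeIntegral_eq]
  exact integral_boundary_rect_eq_zero_of_differentiableAt_im_ne_zero (hc.mono hzw)
    fun x hx => hd x (hzw hx)

end Morera

section SchwarzReflection

noncomputable def schwarzReflection (f : ℂ → ℂ) (z : ℂ) : ℂ :=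
  if 0 ≤ z.im then f z else conj (f (conj z))

variable {f : ℂ → ℂ} {U : Set ℂ}

lemma schwarzReflection_of_im_nonneg {z : ℂ} (hz : 0 ≤ z.im) : schwarzReflection f z = f z :=
  if_pos hz

lemma schwarzReflection_of_im_neg {z : ℂ} (hz : z.im < 0) :
    schwarzReflection f z = conj (f (conj z)) :=
  if_neg hz.not_ge

lemma mapsTo_schwarzReflection {T : Set ℂ} (hU : ∀ z ∈ U, conj z ∈ U)
    (hT : ∀ ζ ∈ T, conj ζ ∈ T) (hf : ∀ z ∈ U, 0 ≤ z.im → f z ∈ T) :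
    MapsTo (schwarzReflection f) U T := by
  intro z hz
  rcases le_or_gt 0 z.im with h | h
  · rw [schwarzReflection_of_im_nonneg h]
    exact hf z hz h
  · rw [schwarzReflection_of_im_neg h]
    exact hT _ (hf _ (hU z hz) (by simpa using h.le))

lemma continuousOn_schwarzReflection (hU : ∀ z ∈ U, conj z ∈ U)
    (hc : ContinuousOn f (U ∩ {z | 0 ≤ z.im})) (hreal : ∀ z ∈ U, z.im = 0 → (f z).im = 0) :
    ContinuousOn (schwarzReflection f) U := by
  refine ContinuousOn.if (fun z hz => ?_) ?_ ?_
  · have him : z.im = 0 := (frontier_le_subset_eq continuous_const continuous_im hz.2).symm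
    rw [conj_eq_iff_im.2 him, conj_eq_iff_im.2 (hreal z hz.1 him)]
  · rwa [(isClosed_le continuous_const continuous_im).closure_eq]
  · simp only [not_le]
    refine (continuous_conj.comp_continuousOn (hc.comp continuous_conj.continuousOn ?_)).mono
      (inter_subset_inter_right U (closure_lt_subset_le continuous_im continuous_const))
    intro z hz
    exact ⟨hU z hz.1, by simpa using hz.2⟩

theorem differentiableOn_schwarzReflection (hU : IsOpen U) (hUconj : ∀ z ∈ U, conj z ∈ U)
    (hc : ContinuousOn f (U ∩ {z | 0 ≤ z.im}))
    (hd : ∀ z ∈ U, 0 < z.im → DifferentiableAt ℂ f z)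
    (hreal : ∀ z ∈ U, z.im = 0 → (f z).im = 0) :
    DifferentiableOn ℂ (schwarzReflection f) U := by
  refine differentiableOn_of_continuousOn_of_differentiableAt_im_ne_zero hU
    (continuousOn_schwarzReflection hUconj hc hreal) fun z hz hz0 => ?_
  rcases hz0.lt_or_gt with h | h
  · have hconj : DifferentiableAt ℂ (conj ∘ f ∘ conj) z := by
      simpa using (hd (conj z) (hUconj z hz) (by simpa using h)).conj_conj
    refine hconj.congr_of_eventuallyEq ?_
    filter_upwards [(isOpen_lt continuous_im continuous_const).mem_nhds h] with w hw
    exact schwarzReflection_of_im_neg hw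
  · refine (hd z hz h).congr_of_eventuallyEq ?_
    filter_upwards [(isOpen_lt continuous_const continuous_im).mem_nhds h] with w hw
    exact schwarzReflection_of_im_nonneg hw.le

end SchwarzReflection

lemma norm_sub_one_div_add_one_lt_one {E : ℂ} (hE : 0 < E.re) : ‖(E - 1) / (E + 1)‖ < 1 := by
  have hE1 : E + 1 ≠ 0 := fun h => by linarith [show E.re + 1 = 0 by simpa using congrArg re h]
  rw [norm_div, div_lt_one (norm_pos_iff.2 hE1), ← sq_lt_sq₀ (norm_nonneg _) (norm_nonneg _),
    Complex.sq_norm, Complex.sq_norm, normSq_apply, normSq_apply]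
  simp only [sub_re, sub_im, add_re, add_im, one_re, one_im]
  nlinarith

lemma re_one_add_div_one_sub_pos {p : ℂ} (hp : ‖p‖ < 1) : 0 < ((1 + p) / (1 - p)).re := by
  have hp2 : p.re * p.re + p.im * p.im < 1 := by
    rw [← normSq_apply, ← Complex.sq_norm]
    nlinarith [norm_nonneg p]
  have hp1 : 1 - p ≠ 0 := sub_ne_zero.2 fun h => by simp [← h] at hp
  have hnum : 0 < (1 + p).re * (1 - p).re + (1 + p).im * (1 - p).im := by
    simp only [add_re, sub_re, add_im, sub_im, one_re, one_im]
    nlinarith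
  rw [div_re, ← add_div]
  exact div_pos hnum (normSq_pos.2 hp1)

lemma one_add_div_one_sub_cayley {E : ℂ} (hE : E + 1 ≠ 0) :
    (1 + (E - 1) / (E + 1)) / (1 - (E - 1) / (E + 1)) = E := by
  field_simp
  ring

lemma re_exp_half_pos {ζ : ℂ} (h : |ζ.im| < π) : 0 < (exp (ζ / 2)).re := by
  rw [exp_re]
  refine mul_pos (Real.exp_pos _) (Real.cos_pos_of_mem_Ioo ?_)
  have := abs_lt.1 h
  constructor <;> simp <;> linarith

lemma norm_lt_of_differentiableOn_ball_of_norm_lt_of_ne {E : Type*} [NormedAddCommGroup E]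
    [NormedSpace ℂ E] [StrictConvexSpace ℝ E] {F : ℂ → E} {c : ℂ} {R M : ℝ} (hR : 0 < R)
    (hd : DifferentiableOn ℂ F (ball c R)) (hlt : ∀ w ∈ ball c R, w ≠ c → ‖F w‖ < M) :
    ‖F c‖ < M := by
  by_contra! hM
  have hmax : IsLocalMax (norm ∘ F) c := by
    filter_upwards [ball_mem_nhds c hR] with w hw
    rcases eq_or_ne w c with rfl | hwc
    · exact le_rfl
    · exact (hlt w hw hwc).le.trans hM
  have hconst := eventually_eq_of_isLocalMax_norm
    (eventually_of_mem (ball_mem_nhds c hR) fun w hw =>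
      hd.differentiableAt (isOpen_ball.mem_nhds hw)) hmax
  have hnear : ∀ᶠ w in 𝓝[≠] c, (F w = F c ∧ w ∈ ball c R) ∧ w ≠ c :=
    ((hconst.filter_mono nhdsWithin_le_nhds).and
      (mem_nhdsWithin_of_mem_nhds (ball_mem_nhds c hR))).and self_mem_nhdsWithin
  obtain ⟨w, ⟨hFw, hw⟩, hwc⟩ := hnear.exists
  exact (hlt w hw hwc).not_ge (hFw ▸ hM)

theorem exists_differentiableOn_ball_eqOn_of_norm_lt_one {F : ℂ → ℂ} {c : ℂ} {R : ℝ}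
    (hR : 0 < R) (hd : DifferentiableOn ℂ F (ball c R \ {c}))
    (hlt : ∀ w ∈ ball c R \ {c}, ‖F w‖ < 1) :
    ∃ G : ℂ → ℂ, DifferentiableOn ℂ G (ball c R) ∧ EqOn G F (ball c R \ {c}) ∧
      ∀ w ∈ ball c R, ‖G w‖ < 1 := by
  set G : ℂ → ℂ := Function.update F c (limUnder (𝓝[≠] c) F)
  have hGd : DifferentiableOn ℂ G (ball c R) :=
    differentiableOn_update_limUnder_of_bddAbove (ball_mem_nhds c hR) hd
      ⟨1, by rintro _ ⟨w, hw, rfl⟩; exact (hlt w hw).le⟩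
  have hGF : EqOn G F (ball c R \ {c}) := fun w hw => Function.update_of_ne hw.2 _ _
  have hne : ∀ w ∈ ball c R, w ≠ c → ‖G w‖ < 1 := fun w hw hwc =>
    hGF ⟨hw, hwc⟩ ▸ hlt w ⟨hw, hwc⟩
  refine ⟨G, hGd, hGF, fun w hw => ?_⟩
  rcases eq_or_ne w c with rfl | hwc
  · exact norm_lt_of_differentiableOn_ball_of_norm_lt_of_ne hR hGd hne
  · exact hne w hw hwc

/-- `ζ ↦ tanh (ζ / 2) = (e^{ζ/2} - 1) / (e^{ζ/2} + 1)` maps the strip `|Im ζ| < π` into the unit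
disc, with inverse `p ↦ 2 log ((1 + p) / (1 - p))`; this reduces the statement to removable
singularities of bounded functions. -/
theorem exists_differentiableOn_ball_eqOn_of_abs_im_lt_pi {h : ℂ → ℂ} {c : ℂ} {R : ℝ}
    (hR : 0 < R) (hd : DifferentiableOn ℂ h (ball c R \ {c}))
    (him : ∀ w ∈ ball c R \ {c}, |(h w).im| < π) :
    ∃ H : ℂ → ℂ, DifferentiableOn ℂ H (ball c R) ∧ EqOn H h (ball c R \ {c}) ∧
      ∀ w ∈ ball c R, |(H w).im| < π := by
  set E : ℂ → ℂ := fun w => exp (h w / 2)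
  have hE : ∀ w ∈ ball c R \ {c}, 0 < (E w).re := fun w hw => re_exp_half_pos (him w hw)
  have hE1 : ∀ w ∈ ball c R \ {c}, E w + 1 ≠ 0 := fun w hw h0 => by
    linarith [hE w hw, show (E w).re + 1 = 0 by simpa using congrArg re h0]
  have hEd : DifferentiableOn ℂ E (ball c R \ {c}) := (hd.div_const 2).cexp
  obtain ⟨Q, hQd, hQP, hQlt⟩ := exists_differentiableOn_ball_eqOn_of_norm_lt_one
    (F := fun w => (E w - 1) / (E w + 1)) hR ((hEd.sub_const 1).div (hEd.add_const 1) hE1)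
    fun w hw => norm_sub_one_div_add_one_lt_one (hE w hw)
  have hQ1 : ∀ w ∈ ball c R, 1 - Q w ≠ 0 := fun w hw =>
    sub_ne_zero.2 fun h1 => by simpa [← h1] using hQlt w hw
  have hpos : ∀ w ∈ ball c R, 0 < ((1 + Q w) / (1 - Q w)).re := fun w hw =>
    re_one_add_div_one_sub_pos (hQlt w hw)
  refine ⟨fun w => 2 * log ((1 + Q w) / (1 - Q w)), ?_, fun w hw => ?_, fun w hw => ?_⟩
  · exact (((hQd.const_add 1).div (hQd.const_sub 1) hQ1).clog fun w hw =>
      mem_slitPlane_iff.2 (Or.inl (hpos w hw))).const_mul 2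
  · have him' := abs_lt.1 (him w hw)
    dsimp only
    rw [hQP hw, one_add_div_one_sub_cayley (hE1 w hw), log_exp, mul_div_cancel₀ _ two_ne_zero]
      <;> rw [div_ofNat_im] <;> linarith
  · have := abs_arg_lt_pi_div_two_iff.2 (Or.inl (hpos w hw))
    simp only [mul_im, re_ofNat, im_ofNat, zero_mul, add_zero, abs_mul, Nat.abs_ofNat, log_im]
    linarith

-- Borel–Carathéodory gives `2π‖w‖ / (R - ‖w‖) ≤ (8π/3) ‖w‖ / R`, whence the constant `12`.
theorem norm_sub_le_twelve_mul_of_im_le_pi {H : ℂ → ℂ} {R : ℝ} (hR : 0 < R)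
    (hd : DifferentiableOn ℂ H (ball 0 R)) (him : ∀ w ∈ ball 0 R, (H w).im ≤ π)
    (h0 : (H 0).im = 0) {w : ℂ} (hw : ‖w‖ ≤ R / 4) :
    ‖H w - H 0‖ ≤ 12 * (‖w‖ / R) := by
  have hwR : w ∈ ball 0 R := mem_ball_zero_iff.2 (by linarith)
  have hbc := borelCaratheodory_zero (f := fun w => -I * (H w - H 0)) Real.pi_pos
    ((hd.sub_const _).const_mul _) (fun w hw => by simpa [h0] using him w hw) hR hwR (by simp)
  simp only [norm_mul, norm_neg, norm_I, one_mul] at hbc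
  calc ‖H w - H 0‖ ≤ 2 * π * ‖w‖ / (R - ‖w‖) := hbc
    _ ≤ 2 * π * ‖w‖ / (3 / 4 * R) := by gcongr; linarith
    _ ≤ 12 * (‖w‖ / R) := by
      rw [div_le_iff₀ (by positivity), mul_div_assoc', div_mul_eq_mul_div, le_div_iff₀ hR]
      have hwR := mul_nonneg (norm_nonneg w) hR.le
      nlinarith [mul_le_mul_of_nonneg_right Real.pi_lt_four.le hwR]

lemma im_eq_zero_of_continuousAt_of_eventually_im_ofReal {H : ℂ → ℂ} (hH : ContinuousAt H 0)
    (hreal : ∀ᶠ t : ℝ in 𝓝[>] 0, (H t).im = 0) : (H 0).im = 0 := by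
  have hlim : Tendsto (fun t : ℝ => (H t).im) (𝓝[>] 0) (𝓝 (H 0).im) :=
    (continuous_im.tendsto _).comp <| hH.tendsto.comp <| by
      simpa using (continuous_ofReal.tendsto 0).mono_left nhdsWithin_le_nhds
  exact tendsto_nhds_unique hlim (tendsto_const_nhds.congr' (EventuallyEq.symm hreal))

lemma continuousOn_log_of_im_nonneg : ContinuousOn log ({w : ℂ | 0 ≤ w.im} \ {0}) := by
  intro w ⟨hw, hw0⟩
  by_cases hslit : w ∈ slitPlane
  · exact (continuousAt_clog hslit).continuousWithinAt
  · have him : w.im = 0 := by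
      by_contra h
      exact hslit (mem_slitPlane_iff.2 (Or.inr h))
    have hre : w.re < 0 := by
      refine lt_of_le_of_ne (not_lt.1 fun h => hslit (mem_slitPlane_iff.2 (Or.inl h))) fun h => ?_
      exact hw0 (ext h him)
    exact (continuousWithinAt_log_of_re_neg_of_im_zero hre him).mono sdiff_subset

lemma log_im_mem_Ioo_of_im_pos {w : ℂ} (hw : 0 < w.im) : 0 < (log w).im ∧ (log w).im < π := by
  rw [log_im]
  refine ⟨lt_of_le_of_ne (arg_nonneg_iff.2 hw.le) fun h => ?_,
    arg_lt_pi_iff.2 (Or.inr hw.ne')⟩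
  exact hw.ne' (arg_eq_zero_iff.1 h.symm).2

def halfStrip (c : ℝ) : Set ℂ := {z | c < z.re ∧ 0 < z.im ∧ z.im < π}

def halfStripWithEdges (c : ℝ) : Set ℂ := {z | c < z.re ∧ 0 ≤ z.im ∧ z.im ≤ π}

lemma isOpen_halfStrip (c : ℝ) : IsOpen (halfStrip c) :=
  (isOpen_lt continuous_const continuous_re).inter
    ((isOpen_lt continuous_const continuous_im).inter (isOpen_lt continuous_im continuous_const))

section HalfStrip

variable {c : ℝ} {V : ℂ → ℂ}

lemma log_mem_halfStripWithEdges {w : ℂ} (hw : Real.exp c < ‖w‖) (him : 0 ≤ w.im) :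
    log w ∈ halfStripWithEdges c := by
  have hw0 : 0 < ‖w‖ := (Real.exp_pos c).trans hw
  exact ⟨by rwa [log_re, Real.lt_log_iff_exp_lt hw0], by rwa [log_im, arg_nonneg_iff],
    by rw [log_im]; exact arg_le_pi w⟩

lemma log_mem_halfStrip {w : ℂ} (hw : Real.exp c < ‖w‖) (him : 0 < w.im) :
    log w ∈ halfStrip c :=
  ⟨(log_mem_halfStripWithEdges hw him.le).1, log_im_mem_Ioo_of_im_pos him⟩

lemma continuousOn_sub_log (hc : ContinuousOn V (halfStripWithEdges c)) :
    ContinuousOn (fun w => V (log w) - log w) ({w : ℂ | Real.exp c < ‖w‖} ∩ {w | 0 ≤ w.im}) := by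
  have hlog : ContinuousOn log ({w : ℂ | Real.exp c < ‖w‖} ∩ {w | 0 ≤ w.im}) :=
    continuousOn_log_of_im_nonneg.mono fun w hw =>
      ⟨hw.2, by simpa using ((Real.exp_pos c).trans hw.1).ne'⟩
  exact (hc.comp hlog fun w hw => log_mem_halfStripWithEdges hw.1 hw.2).sub hlog

lemma differentiableAt_sub_log (hd : DifferentiableOn ℂ V (halfStrip c)) {w : ℂ}
    (hw : Real.exp c < ‖w‖) (him : 0 < w.im) :
    DifferentiableAt ℂ (fun w => V (log w) - log w) w := by
  have hlog : DifferentiableAt ℂ log w :=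
    differentiableAt_log (mem_slitPlane_iff.2 (Or.inr him.ne'))
  have hV := hd.differentiableAt ((isOpen_halfStrip c).mem_nhds (log_mem_halfStrip hw him))
  exact (hV.comp w hlog).sub hlog

lemma im_sub_log_eq_zero (hlow : ∀ z : ℂ, z.im = 0 → c < z.re → (V z).im = 0)
    (hup : ∀ z : ℂ, z.im = π → c < z.re → (V z).im = π) {w : ℂ} (hw : Real.exp c < ‖w‖)
    (him : w.im = 0) : (V (log w) - log w).im = 0 := by
  have hre := (log_mem_halfStripWithEdges hw him.ge).1
  rcases le_or_gt 0 w.re with hpos | hneg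
  · have harg : (log w).im = 0 := by rw [log_im]; exact arg_eq_zero_iff.2 ⟨hpos, him⟩
    simp [hlow _ harg hre, harg]
  · have harg : (log w).im = π := by rw [log_im]; exact arg_eq_pi_iff.2 ⟨hneg, him⟩
    simp [hup _ harg hre, harg]

lemma abs_im_sub_log_lt_pi (hmaps : MapsTo V (halfStrip c) {z : ℂ | 0 < z.im ∧ z.im < π})
    (hlow : ∀ z : ℂ, z.im = 0 → c < z.re → (V z).im = 0)
    (hup : ∀ z : ℂ, z.im = π → c < z.re → (V z).im = π) {w : ℂ} (hw : Real.exp c < ‖w‖)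
    (him : 0 ≤ w.im) : |(V (log w) - log w).im| < π := by
  rcases him.eq_or_lt with him | him
  · rw [im_sub_log_eq_zero hlow hup hw him.symm, abs_zero]
    exact Real.pi_pos
  · have hlog := log_im_mem_Ioo_of_im_pos him
    have hV := hmaps (log_mem_halfStrip hw him)
    rw [sub_im, abs_lt]
    constructor <;> linarith [hV.1, hV.2]

theorem exists_differentiableOn_ball_comp_exp_neg_eq_sub
    (hc : ContinuousOn V (halfStripWithEdges c)) (hd : DifferentiableOn ℂ V (halfStrip c))
    (hmaps : MapsTo V (halfStrip c) {z : ℂ | 0 < z.im ∧ z.im < π})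
    (hlow : ∀ z : ℂ, z.im = 0 → c < z.re → (V z).im = 0)
    (hup : ∀ z : ℂ, z.im = π → c < z.re → (V z).im = π) :
    ∃ H : ℂ → ℂ, DifferentiableOn ℂ H (ball 0 (Real.exp (-c))) ∧
      (∀ w ∈ ball 0 (Real.exp (-c)), |(H w).im| < π) ∧ (H 0).im = 0 ∧
      ∀ z ∈ halfStripWithEdges c, H (exp (-z)) = V z - z := by
  set Ω : Set ℂ := {w : ℂ | Real.exp c < ‖w‖}
  set g := schwarzReflection fun w => V (log w) - log w with hg
  have hΩconj : ∀ w ∈ Ω, conj w ∈ Ω := fun w hw => by simpa [Ω] using hw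
  have hgd : DifferentiableOn ℂ g Ω :=
    differentiableOn_schwarzReflection (isOpen_lt continuous_const continuous_norm) hΩconj
      (continuousOn_sub_log hc) (fun w hw him => differentiableAt_sub_log hd hw him)
      fun w hw him => im_sub_log_eq_zero hlow hup hw him
  have hgim : MapsTo g Ω {ζ | |ζ.im| < π} :=
    mapsTo_schwarzReflection hΩconj (fun ζ hζ => by simpa using hζ)
      fun w hw him => abs_im_sub_log_lt_pi hmaps hlow hup hw him
  have hinv : MapsTo (·⁻¹) (ball (0 : ℂ) (Real.exp (-c)) \ {0}) Ω := fun w ⟨hw, hw0⟩ => by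
    show Real.exp c < ‖w⁻¹‖
    rw [norm_inv, lt_inv_comm₀ (Real.exp_pos c) (norm_pos_iff.2 hw0), ← Real.exp_neg]
    simpa using hw
  obtain ⟨H, hHd, hHg, hHim⟩ := exists_differentiableOn_ball_eqOn_of_abs_im_lt_pi
    (Real.exp_pos _) (hgd.comp (differentiableOn_inv.mono fun w hw => hw.2) hinv)
    fun w hw => hgim (hinv hw)
  refine ⟨H, hHd, hHim, ?_, fun z ⟨hzc, hz0, hzπ⟩ => ?_⟩
  · refine im_eq_zero_of_continuousAt_of_eventually_im_ofReal
      (hHd.continuousOn.continuousAt (ball_mem_nhds 0 (Real.exp_pos _))) ?_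
    filter_upwards [Ioo_mem_nhdsGT (Real.exp_pos (-c))] with t ht
    have htmem : (t : ℂ) ∈ ball (0 : ℂ) (Real.exp (-c)) \ {0} :=
      ⟨by simpa [abs_of_pos ht.1] using ht.2, by simp [ht.1.ne']⟩
    have him : ((t : ℂ)⁻¹).im = 0 := by simp
    rw [hHg htmem, Function.comp_apply, hg, schwarzReflection_of_im_nonneg him.ge]
    exact im_sub_log_eq_zero hlow hup (hinv htmem) him
  · have hmem : exp (-z) ∈ ball (0 : ℂ) (Real.exp (-c)) \ {0} :=
      ⟨by simpa [norm_exp] using hzc, exp_ne_zero _⟩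
    have hexp : 0 ≤ (exp z).im := by
      rw [exp_im]
      exact mul_nonneg (Real.exp_pos _).le (Real.sin_nonneg_of_nonneg_of_le_pi hz0 hzπ)
    rw [hHg hmem, Function.comp_apply, ← exp_neg, neg_neg, hg,
      schwarzReflection_of_im_nonneg hexp, log_exp (by linarith [Real.pi_pos]) hzπ]

theorem exists_norm_sub_sub_le_of_mapsTo_halfStrip
    (hc : ContinuousOn V (halfStripWithEdges c)) (hd : DifferentiableOn ℂ V (halfStrip c))
    (hmaps : MapsTo V (halfStrip c) {z : ℂ | 0 < z.im ∧ z.im < π})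
    (hlow : ∀ z : ℂ, z.im = 0 → c < z.re → (V z).im = 0)
    (hup : ∀ z : ℂ, z.im = π → c < z.re → (V z).im = π) :
    ∃ h : ℝ, ∀ z : ℂ, 0 ≤ z.im → z.im ≤ π → c + Real.log 4 ≤ z.re →
      ‖V z - z - h‖ ≤ 12 * Real.exp (c - z.re) := by
  obtain ⟨H, hHd, hHim, hH0, hHV⟩ :=
    exists_differentiableOn_ball_comp_exp_neg_eq_sub hc hd hmaps hlow hup
  refine ⟨(H 0).re, fun z hz0 hzπ hzc => ?_⟩
  have hlog4 : 0 < Real.log 4 := Real.log_pos (by norm_num)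
  have hw : ‖exp (-z)‖ ≤ Real.exp (-c) / 4 := by
    rw [norm_exp, neg_re, ← Real.exp_log (show (0 : ℝ) < 4 by norm_num), ← Real.exp_sub]
    exact Real.exp_le_exp.2 (by linarith)
  calc ‖V z - z - (H 0).re‖ = ‖H (exp (-z)) - H 0‖ := by
        rw [hHV z ⟨by linarith, hz0, hzπ⟩, ← re_add_im (H 0), hH0]
        simp
    _ ≤ 12 * (‖exp (-z)‖ / Real.exp (-c)) :=
      norm_sub_le_twelve_mul_of_im_le_pi (Real.exp_pos _) hHd
        (fun w hw => (abs_lt.1 (hHim w hw)).2.le) hH0 hw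
    _ = 12 * Real.exp (c - z.re) := by
      rw [norm_exp, neg_re, ← Real.exp_sub, neg_sub_neg]

end HalfStrip

theorem statement5_general (c : ℝ) (K : Set ℂ) (V : ℂ → ℂ)
    (hKre : ∀ z ∈ K, z.re ≤ c)
    (hcont : ContinuousOn V (({z : ℂ | 0 < z.im ∧ z.im < Real.pi} \ K)
      ∪ {z : ℂ | z.im = 0 ∧ c < z.re} ∪ {z : ℂ | z.im = Real.pi ∧ c < z.re}))
    (hdiff : DifferentiableOn ℂ V ({z : ℂ | 0 < z.im ∧ z.im < Real.pi} \ K))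
    (himage : V '' ({z : ℂ | 0 < z.im ∧ z.im < Real.pi} \ K)
      = {z : ℂ | 0 < z.im ∧ z.im < Real.pi})
    (hlow : ∀ z : ℂ, z.im = 0 → c < z.re → (V z).im = 0)
    (hup : ∀ z : ℂ, z.im = Real.pi → c < z.re → (V z).im = Real.pi) :
    ∃ h : ℝ, ∀ z ∈ (({z : ℂ | 0 < z.im ∧ z.im < Real.pi} \ K)
        ∪ {z : ℂ | z.im = 0 ∧ c < z.re} ∪ {z : ℂ | z.im = Real.pi ∧ c < z.re}),
      c + Real.log 4 ≤ z.re →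
        ‖V z - z - (h : ℂ)‖ ≤ 12 * Real.exp (c - z.re) := by
  have hstrip : halfStrip c ⊆ {z : ℂ | 0 < z.im ∧ z.im < π} \ K :=
    fun z ⟨hre, him⟩ => ⟨him, fun hK => (hKre z hK).not_gt hre⟩
  have hedges : halfStripWithEdges c ⊆ ({z : ℂ | 0 < z.im ∧ z.im < π} \ K)
      ∪ {z : ℂ | z.im = 0 ∧ c < z.re} ∪ {z : ℂ | z.im = π ∧ c < z.re} := by
    rintro z ⟨hre, h0, hπ⟩
    rcases h0.eq_or_lt with h0 | h0
    · exact Or.inl (Or.inr ⟨h0.symm, hre⟩)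
    rcases hπ.eq_or_lt with hπ | hπ
    · exact Or.inr ⟨hπ, hre⟩
    · exact Or.inl (Or.inl (hstrip ⟨hre, h0, hπ⟩))
  obtain ⟨h, hh⟩ := exists_norm_sub_sub_le_of_mapsTo_halfStrip (hcont.mono hedges)
    (hdiff.mono hstrip) (fun z hz => himage ▸ mem_image_of_mem V (hstrip hz)) hlow hup
  refine ⟨h, fun z hz hzre => hh z ?_ ?_ hzre⟩ <;>
    rcases hz with (⟨⟨h0, hπ⟩, -⟩ | ⟨h0, -⟩) | ⟨hπ, -⟩
  all_goals linarith [Real.pi_pos]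

/-- Let `S_π = {0 < Im z < π}` and `ℝ_π = {Im z = π}`. Let `c ∈ ℝ` and let
`K ⊆ S_π` be relatively closed in `S_π` with `Re z ≤ c` for all `z ∈ K` and with `S_π∖K`
simply connected. Let `V` be continuous on `(S_π∖K) ∪ (c,∞) ∪ ((c,∞)+πi)`, holomorphic and
injective on `S_π∖K` with `V(S_π∖K) = S_π`, with `Re V(z) → +∞` as `Re z → +∞` in `S_π∖K`,
`V((c,∞)) ⊆ ℝ` and `V((c,∞)+πi) ⊆ ℝ_π`. Then there exists `h ∈ ℝ` such that for every `z`
in the domain of `V` with `Re z ≥ c + ln 4`, `|V(z) − z − h| ≤ 12 e^{c − Re z}`. -/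
theorem statement5 (c : ℝ) (K : Set ℂ) (V : ℂ → ℂ)
    (hKsub : K ⊆ {z : ℂ | 0 < z.im ∧ z.im < Real.pi})
    (hKre : ∀ z ∈ K, z.re ≤ c)
    (hKclosed : ∀ z ∈ closure K, (0 < z.im ∧ z.im < Real.pi) → z ∈ K)
    (hopen : IsOpen ({z : ℂ | 0 < z.im ∧ z.im < Real.pi} \ K))
    (hconn : IsConnected ({z : ℂ | 0 < z.im ∧ z.im < Real.pi} \ K))
    (hsc : SimplyConnectedSpace ↥({z : ℂ | 0 < z.im ∧ z.im < Real.pi} \ K))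
    (hcont : ContinuousOn V (({z : ℂ | 0 < z.im ∧ z.im < Real.pi} \ K)
      ∪ {z : ℂ | z.im = 0 ∧ c < z.re} ∪ {z : ℂ | z.im = Real.pi ∧ c < z.re}))
    (hdiff : DifferentiableOn ℂ V ({z : ℂ | 0 < z.im ∧ z.im < Real.pi} \ K))
    (hinj : Set.InjOn V ({z : ℂ | 0 < z.im ∧ z.im < Real.pi} \ K))
    (himage : V '' ({z : ℂ | 0 < z.im ∧ z.im < Real.pi} \ K)
      = {z : ℂ | 0 < z.im ∧ z.im < Real.pi})
    (hlim : Filter.Tendsto (fun z => (V z).re)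
      (Filter.comap Complex.re Filter.atTop
        ⊓ Filter.principal ({z : ℂ | 0 < z.im ∧ z.im < Real.pi} \ K)) Filter.atTop)
    (hlow : ∀ z : ℂ, z.im = 0 → c < z.re → (V z).im = 0)
    (hup : ∀ z : ℂ, z.im = Real.pi → c < z.re → (V z).im = Real.pi) :
    ∃ h : ℝ, ∀ z ∈ (({z : ℂ | 0 < z.im ∧ z.im < Real.pi} \ K)
        ∪ {z : ℂ | z.im = 0 ∧ c < z.re} ∪ {z : ℂ | z.im = Real.pi ∧ c < z.re}),
      c + Real.log 4 ≤ z.re →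
        ‖V z - z - (h : ℂ)‖ ≤ 12 * Real.exp (c - z.re) :=
  statement5_general c K V hKre hcont hdiff himage hlow hup
end

section
/- Let κ > 0, set τ = κ/2 − 2 and α = (6−κ)/(2κ), and define Γ̂_∞ : ℝ × ℝ → ℝ by Γ̂_∞(t,x) = 2^{−2/κ} · e^{−((τ²−1)/(2κ))·t} · (cosh(x/2))^{(2/κ)(τ−1)}. Then Γ̂_∞ is smooth and satisfies, for all t, x ∈ ℝ, the partial differential equation −∂_t Γ̂_∞(t,x) = (κ/2)·∂_x² Γ̂_∞(t,x) + ∂_x Γ̂_∞(t,x) · tanh(x/2) + α · (1/(2 cosh²(x/2))) · Γ̂_∞(t,x). -/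
open Real

private lemma coshpow_hasDerivAt (a x : ℝ) :
    HasDerivAt (fun y => Real.cosh (y / 2) ^ a)
      (a * Real.cosh (x / 2) ^ (a - 1) * (Real.sinh (x / 2) * (1 / 2))) x := by
  have h1 : HasDerivAt (fun y : ℝ => y / 2) (1 / 2) x := (hasDerivAt_id x).div_const 2
  have h2 : HasDerivAt (fun y => Real.cosh (y / 2)) (Real.sinh (x / 2) * (1 / 2)) x :=
    by have := (Real.hasDerivAt_cosh (x / 2)).comp x h1; exact this
  have h3 := (Real.hasDerivAt_rpow_const (x := Real.cosh (x / 2)) (p := a)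
    (Or.inl (ne_of_gt (Real.cosh_pos _)))).comp x h2
  exact h3

private lemma sinhhalf_hasDerivAt (x : ℝ) :
    HasDerivAt (fun y => Real.sinh (y / 2) * (1 / 2))
      (Real.cosh (x / 2) * (1 / 2) * (1 / 2)) x := by
  have h1 : HasDerivAt (fun y : ℝ => y / 2) (1 / 2) x := (hasDerivAt_id x).div_const 2
  have h2 : HasDerivAt (fun y => Real.sinh (y / 2)) (Real.cosh (x / 2) * (1 / 2)) x :=
    by have := (Real.hasDerivAt_sinh (x / 2)).comp x h1; exact this
  exact h2.mul_const _

/-- Let `κ > 0`, `τ = κ/2 − 2`, `α = (6−κ)/(2κ)`, and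
`Γ̂_∞(t,x) = 2^{−2/κ} e^{−((τ²−1)/(2κ)) t} (cosh(x/2))^{(2/κ)(τ−1)}`. Then `Γ̂_∞` is smooth
and satisfies `−∂_t Γ̂_∞ = (κ/2) ∂_x² Γ̂_∞ + ∂_x Γ̂_∞ · tanh(x/2) + α (1/(2cosh²(x/2))) Γ̂_∞`. -/
theorem statement10 (κ : ℝ) (hκ : 0 < κ) :
    ContDiff ℝ (⊤ : ℕ∞) (fun p : ℝ × ℝ =>
      (2 : ℝ) ^ (-(2 / κ)) * Real.exp (-(((κ / 2 - 2) ^ 2 - 1) / (2 * κ)) * p.1)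
        * Real.cosh (p.2 / 2) ^ ((2 / κ) * ((κ / 2 - 2) - 1))) ∧
    ∀ t x : ℝ,
      -(deriv (fun s : ℝ =>
          (2 : ℝ) ^ (-(2 / κ)) * Real.exp (-(((κ / 2 - 2) ^ 2 - 1) / (2 * κ)) * s)
            * Real.cosh (x / 2) ^ ((2 / κ) * ((κ / 2 - 2) - 1))) t)
      = κ / 2 * deriv (deriv (fun y : ℝ =>
            (2 : ℝ) ^ (-(2 / κ)) * Real.exp (-(((κ / 2 - 2) ^ 2 - 1) / (2 * κ)) * t)
              * Real.cosh (y / 2) ^ ((2 / κ) * ((κ / 2 - 2) - 1)))) x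
        + deriv (fun y : ℝ =>
            (2 : ℝ) ^ (-(2 / κ)) * Real.exp (-(((κ / 2 - 2) ^ 2 - 1) / (2 * κ)) * t)
              * Real.cosh (y / 2) ^ ((2 / κ) * ((κ / 2 - 2) - 1))) x * Real.tanh (x / 2)
        + (6 - κ) / (2 * κ) * (1 / (2 * Real.cosh (x / 2) ^ 2))
            * ((2 : ℝ) ^ (-(2 / κ)) * Real.exp (-(((κ / 2 - 2) ^ 2 - 1) / (2 * κ)) * t)
              * Real.cosh (x / 2) ^ ((2 / κ) * ((κ / 2 - 2) - 1))) := by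
  have hκ' : κ ≠ 0 := ne_of_gt hκ
  set a : ℝ := (2 / κ) * ((κ / 2 - 2) - 1) with ha
  set c : ℝ := ((κ / 2 - 2) ^ 2 - 1) / (2 * κ) with hc
  constructor
  · -- smoothness
    have h1 : ContDiff ℝ (⊤ : ℕ∞) (fun p : ℝ × ℝ =>
        (2 : ℝ) ^ (-(2 / κ)) * Real.exp (-c * p.1)) :=
      contDiff_const.mul (Real.contDiff_exp.comp (contDiff_const.mul contDiff_fst))
    have h2 : ContDiff ℝ (⊤ : ℕ∞) (fun p : ℝ × ℝ => Real.cosh (p.2 / 2) ^ a) := by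
      rw [contDiff_iff_contDiffAt]
      intro p
      exact (Real.contDiff_cosh.contDiffAt.comp p
        (contDiff_snd.div_const 2).contDiffAt).rpow_const_of_ne
        (ne_of_gt (Real.cosh_pos _))
    exact h1.mul h2
  · intro t x
    set C : ℝ := (2 : ℝ) ^ (-(2 / κ)) with hC
    -- time derivative
    have ht : HasDerivAt (fun s : ℝ => C * Real.exp (-c * s) * Real.cosh (x / 2) ^ a)
        (C * (Real.exp (-c * t) * -c) * Real.cosh (x / 2) ^ a) t := by
      have h0 : HasDerivAt (fun s : ℝ => Real.exp (-c * s)) (Real.exp (-c * t) * -c) t := by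
        have := ((hasDerivAt_id t).const_mul (-c)).exp
        simpa using this
      exact ((h0.const_mul C).mul_const _)
    -- first space derivative as a function
    have hx1 : deriv (fun y : ℝ => C * Real.exp (-c * t) * Real.cosh (y / 2) ^ a)
        = fun y => C * Real.exp (-c * t) *
            (a * Real.cosh (y / 2) ^ (a - 1) * (Real.sinh (y / 2) * (1 / 2))) := by
      funext y
      exact ((coshpow_hasDerivAt a y).const_mul (C * Real.exp (-c * t))).deriv
    -- second space derivative
    have hx2 : HasDerivAt (fun y => C * Real.exp (-c * t) *
          (a * Real.cosh (y / 2) ^ (a - 1) * (Real.sinh (y / 2) * (1 / 2))))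
        (C * Real.exp (-c * t) * (a *
          ((a - 1) * Real.cosh (x / 2) ^ (a - 1 - 1) * (Real.sinh (x / 2) * (1 / 2))
              * (Real.sinh (x / 2) * (1 / 2))
            + Real.cosh (x / 2) ^ (a - 1) * (Real.cosh (x / 2) * (1 / 2) * (1 / 2))))) x := by
      have hcp : HasDerivAt (fun y => Real.cosh (y / 2) ^ (a - 1))
          ((a - 1) * Real.cosh (x / 2) ^ (a - 1 - 1) * (Real.sinh (x / 2) * (1 / 2))) x :=
        coshpow_hasDerivAt (a - 1) x
      have h := (hcp.mul (sinhhalf_hasDerivAt x)).const_mul (C * Real.exp (-c * t) * a)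
      have hfun : (fun y => C * Real.exp (-c * t) *
            (a * Real.cosh (y / 2) ^ (a - 1) * (Real.sinh (y / 2) * (1 / 2))))
          = fun y => (C * Real.exp (-c * t) * a) *
              (Real.cosh (y / 2) ^ (a - 1) * (Real.sinh (y / 2) * (1 / 2))) := by
        funext y; ring
      rw [hfun]
      refine h.congr_deriv ?_
      ring
    rw [ht.deriv, hx1, hx2.deriv]
    beta_reduce
    -- now pure algebra
    have hcosh : (0:ℝ) < Real.cosh (x / 2) := Real.cosh_pos _
    have hc2 : Real.cosh (x / 2) ≠ 0 := ne_of_gt hcosh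
    have eB : Real.cosh (x / 2) ^ (a - 1)
        = Real.cosh (x / 2) ^ (a - 1 - 1) * Real.cosh (x / 2) := by
      rw [← Real.rpow_add_one hc2]
      norm_num
    have eA : Real.cosh (x / 2) ^ a
        = Real.cosh (x / 2) ^ (a - 1 - 1) * Real.cosh (x / 2) ^ 2 := by
      rw [sq, ← mul_assoc, ← Real.rpow_add_one hc2, ← Real.rpow_add_one hc2]
      norm_num
    rw [eA, eB, Real.tanh_eq_sinh_div_cosh, hc, ha]
    have hpyth : Real.sinh (x / 2) ^ 2 = Real.cosh (x / 2) ^ 2 - 1 := by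
      have := Real.cosh_sq_sub_sinh_sq (x / 2); linarith
    field_simp
    ring_nf
    ring_nf at hpyth
    simp only [hpyth]
    ring
end
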